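/- Let λ be a Borel measure on ℝ^{n+2} that is invariant under g_t for every t ∈ ℝ and is finite on compact sets. Then for every c > 0 and every Borel set A ⊆ S^{n−1}, λ(E_{T,c,A})/T → λ(F_{1,c,A}) as T → ∞ (limit in the extended nonnegative reals). -/

import Mathlib

noncomputable section

open MeasureTheory Metric Filter Topology
open scoped ENNReal

/-- The index of the coordinate `x_{n+2}` (0-indexed: `n+1`). -/
def lastC (n : ℕ) : Fin (n + 2) := Fin.last (n + 1)

/-- The index of the coordinate `x_{n+1}` (0-indexed: `n`). -/
def sndC (n : ℕ) : Fin (n + 2) := ⟨n, by omega⟩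

/-- The quadratic form `Q(x) = x_1² + ⋯ + x_{n+1}² − x_{n+2}²`. -/
def Qf (n : ℕ) (x : EuclideanSpace ℝ (Fin (n + 2))) : ℝ :=
  (∑ i : Fin (n + 1), x (Fin.castSucc i) ^ 2) - x (lastC n) ^ 2

/-- The positive light cone. -/
def lightCone (n : ℕ) : Set (EuclideanSpace ℝ (Fin (n + 2))) :=
  {x | Qf n x = 0 ∧ 0 ≤ x (lastC n)}

/-- `Λ₀`: the intersection of the light cone with `ℤ^{n+1} × ℤ_{>0}`. -/
def Lat0 (n : ℕ) : Set (EuclideanSpace ℝ (Fin (n + 2))) :=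
  {x | x ∈ lightCone n ∧ (∀ i, ∃ m : ℤ, x i = (m : ℝ)) ∧ 0 < x (lastC n)}

/-- The set `F_{T,c}`. -/
def Fset (n : ℕ) (T c : ℝ) : Set (EuclideanSpace ℝ (Fin (n + 2))) :=
  {x | x ∈ lightCone n ∧ x (lastC n) ^ 2 - x (sndC n) ^ 2 < c ^ 2 ∧
    1 ≤ x (sndC n) + x (lastC n) ∧ x (sndC n) + x (lastC n) < Real.exp T}

/-- The set `E_{T,c}`. -/
def Eset (n : ℕ) (T c : ℝ) : Set (EuclideanSpace ℝ (Fin (n + 2))) :=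
  {x | x ∈ lightCone n ∧ 2 * x (lastC n) * (x (lastC n) - x (sndC n)) < c ^ 2 ∧
    1 ≤ x (lastC n) ∧ x (lastC n) < Real.cosh T}

/-- The first `n+1` coordinates of a point of `ℝ^{n+2}`. -/
def firstPart (n : ℕ) (x : EuclideanSpace ℝ (Fin (n + 2))) : EuclideanSpace ℝ (Fin (n + 1)) :=
  WithLp.toLp 2 (fun i => x (Fin.castSucc i))

/-- The first `n` coordinates of a point of `ℝ^{n+2}`. -/
def headN (n : ℕ) (x : EuclideanSpace ℝ (Fin (n + 2))) : EuclideanSpace ℝ (Fin n) :=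
  WithLp.toLp 2 (fun (i : Fin n) => x (Fin.castLE (by omega) i))

/-- The direction map `π(x) = (x_1,…,x_n)/‖(x_1,…,x_n)‖`. -/
def dir (n : ℕ) (x : EuclideanSpace ℝ (Fin (n + 2))) : EuclideanSpace ℝ (Fin n) :=
  ‖headN n x‖⁻¹ • headN n x

/-- The one-parameter diagonal flow `g_t`. -/
def gmap (n : ℕ) (t : ℝ) (x : EuclideanSpace ℝ (Fin (n + 2))) :
    EuclideanSpace ℝ (Fin (n + 2)) :=
  WithLp.toLp 2 fun i =>
    if i = sndC n then Real.cosh t * x (sndC n) - Real.sinh t * x (lastC n)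
    else if i = lastC n then - Real.sinh t * x (sndC n) + Real.cosh t * x (lastC n)
    else x i

/-- The set `F_{T,c,A}`. -/
def FsetA (n : ℕ) (T c : ℝ) (A : Set ↑(sphere (0 : EuclideanSpace ℝ (Fin n)) 1)) :
    Set (EuclideanSpace ℝ (Fin (n + 2))) :=
  {x | x ∈ Fset n T c ∧ headN n x ≠ 0 ∧ dir n x ∈ Subtype.val '' A}

/-- The set `E_{T,c,A}`. -/
def EsetA (n : ℕ) (T c : ℝ) (A : Set ↑(sphere (0 : EuclideanSpace ℝ (Fin n)) 1)) :
    Set (EuclideanSpace ℝ (Fin (n + 2))) :=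
  {x | x ∈ Eset n T c ∧ headN n x ≠ 0 ∧ dir n x ∈ Subtype.val '' A}

/-!
In the light-cone coordinates `u = x_{n+1} + x_{n+2}`, `v = x_{n+2} - x_{n+1}` the flow `g_t` acts
by `(u, v) ↦ (e^{-t} u, e^t v)`, the cone is `‖(x_1,…,x_n)‖² = u v` with `u, v ≥ 0`, and
`F_{T,c}`, `E_{T,c}` become the plane regions `u v < c², 1 ≤ u < e^T` and
`(u + v) v < c², 2 ≤ u + v < 2 cosh T`. Pushing `λ` restricted to the directions in `A` to the
`(u, v)`-plane gives a locally finite measure `ν` on the quadrant, invariant under this hyperbolic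
flow. By invariance `F_{m,c}` is the disjoint union of `m` flow-translates of `F_{1,c}`. Up to a
fixed box and its translate by the flow at time `T`, `E_{T,c}` lies inside `F_{T,c}`, and
`F_{T,c}` lies inside `E_{T,c}` except for the points with `(u + v) v ≥ c²`. Flowing the part with
`e^k ≤ u < e^{k+1}` back to `1 ≤ u < e` puts it in the shell `c² ≤ u v + e^{-2k} v²`, whose
measure tends to `0`; by Cesàro these `⌊T⌋ + 1` shells cost `o(T)`.
-/

lemma tendsto_sum_range_floor_succ_div {r : ℕ → ℝ} (hr : Tendsto r atTop (𝓝 0)) :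
    Tendsto (fun T : ℝ => (∑ k ∈ Finset.range (⌊T⌋₊ + 1), r k) / T) atTop (𝓝 0) := by
  have hN : Tendsto (fun T : ℝ => ⌊T⌋₊ + 1) atTop atTop :=
    (tendsto_add_atTop_nat 1).comp tendsto_nat_floor_atTop
  have hratio : Tendsto (fun T : ℝ => ((⌊T⌋₊ + 1 : ℕ) : ℝ) / T) atTop (𝓝 1) := by
    simpa [add_div] using (tendsto_nat_floor_div_atTop (R := ℝ)).add tendsto_inv_atTop_zero
  have hprod := (hr.cesaro.comp hN).mul hratio
  rw [zero_mul] at hprod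
  refine hprod.congr' ?_
  filter_upwards [eventually_gt_atTop 0] with T hT
  have : ((⌊T⌋₊ + 1 : ℕ) : ℝ) ≠ 0 := by positivity
  simp only [Function.comp_apply]
  field_simp

lemma tendsto_div_of_floor_bounds {f : ℝ → ℝ} {ℓ C : ℝ} {r : ℕ → ℝ}
    (hr : Tendsto r atTop (𝓝 0))
    (hup : ∀ᶠ T in atTop, f T ≤ (⌊T⌋₊ + 1) * ℓ + C)
    (hlow : ∀ᶠ T in atTop, ⌊T⌋₊ * ℓ ≤ f T + C + ∑ k ∈ Finset.range (⌊T⌋₊ + 1), r k) :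
    Tendsto (fun T => f T / T) atTop (𝓝 ℓ) := by
  have hfloor : Tendsto (fun T : ℝ => (⌊T⌋₊ : ℝ) / T) atTop (𝓝 1) := tendsto_nat_floor_div_atTop
  have hinv : Tendsto (fun T : ℝ => T⁻¹) atTop (𝓝 0) := tendsto_inv_atTop_zero
  have hlower := ((hfloor.mul_const ℓ).sub (hinv.const_mul C)).sub
    (tendsto_sum_range_floor_succ_div hr)
  have hupper := (hfloor.mul_const ℓ).add (hinv.const_mul (ℓ + C))
  simp only [one_mul, mul_zero, sub_zero, add_zero] at hlower hupper
  refine tendsto_of_tendsto_of_tendsto_of_le_of_le' hlower hupper ?_ ?_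
  · filter_upwards [hlow, eventually_gt_atTop 0] with T h hT
    calc _ = (⌊T⌋₊ * ℓ - C - ∑ k ∈ Finset.range (⌊T⌋₊ + 1), r k) / T := by ring
      _ ≤ f T / T := by gcongr; linarith
  · filter_upwards [hup, eventually_gt_atTop 0] with T h hT
    calc f T / T ≤ ((⌊T⌋₊ + 1) * ℓ + C) / T := by gcongr
      _ = _ := by ring

lemma ENNReal.tendsto_div_ofReal_of_floor_bounds {e : ℝ → ℝ≥0∞} {L C : ℝ≥0∞} {a : ℕ → ℝ≥0∞}
    (hL : L ≠ ∞) (hC : C ≠ ∞) (ha : ∀ k, a k ≠ ∞) (ha0 : Tendsto a atTop (𝓝 0))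
    (hup : ∀ᶠ T in atTop, e T ≤ (⌊T⌋₊ + 1) * L + C)
    (hlow : ∀ᶠ T in atTop, ⌊T⌋₊ * L ≤ e T + C + ∑ k ∈ Finset.range (⌊T⌋₊ + 1), a k) :
    Tendsto (fun T => e T / ENNReal.ofReal T) atTop (𝓝 L) := by
  have he : ∀ᶠ T in atTop, e T ≠ ∞ := hup.mono fun T h => ne_top_of_le_ne_top (by finiteness) h
  have hsum (m : ℕ) : ∑ k ∈ Finset.range m, a k ≠ ∞ := ENNReal.sum_ne_top.2 fun k _ => ha k
  have hreal : Tendsto (fun T => (e T).toReal / T) atTop (𝓝 L.toReal) := by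
    refine tendsto_div_of_floor_bounds (C := C.toReal)
      ((ENNReal.tendsto_toReal ENNReal.zero_ne_top).comp ha0) ?_ ?_
    · filter_upwards [hup] with T h
      have := ENNReal.toReal_mono (by finiteness) h
      rwa [ENNReal.toReal_add (by finiteness) hC, ENNReal.toReal_mul,
        ENNReal.toReal_add (by simp) (by simp)] at this
    · filter_upwards [hlow, he] with T h h'
      have := ENNReal.toReal_mono (by finiteness [hsum (⌊T⌋₊ + 1)]) h
      rwa [ENNReal.toReal_add (by finiteness) (hsum _), ENNReal.toReal_add h' hC,
        ENNReal.toReal_sum fun k _ => ha k, ENNReal.toReal_mul] at this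
  rw [← ENNReal.ofReal_toReal hL]
  refine (ENNReal.tendsto_ofReal hreal).congr' ?_
  filter_upwards [he, eventually_gt_atTop 0] with T h hT
  rw [ENNReal.ofReal_div_of_pos hT, ENNReal.ofReal_toReal h]

namespace LightCone

open Real Set

def lcFlow (t : ℝ) (p : ℝ × ℝ) : ℝ × ℝ := (exp (-t) * p.1, exp t * p.2)

def fRegion (c a b : ℝ) : Set (ℝ × ℝ) := {p | p.1 * p.2 < c ^ 2 ∧ a ≤ p.1 ∧ p.1 < b}

def eRegion (c T : ℝ) : Set (ℝ × ℝ) :=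
  {p | (p.1 + p.2) * p.2 < c ^ 2 ∧ 2 ≤ p.1 + p.2 ∧ p.1 + p.2 < 2 * cosh T}

def lcBox (c : ℝ) : Set (ℝ × ℝ) := Icc 0 2 ×ˢ Icc 0 (c ^ 2 + 2)

def shell (c δ : ℝ) : Set (ℝ × ℝ) := fRegion c 1 (exp 1) ∩ {p | c ^ 2 ≤ p.1 * p.2 + δ * p.2 ^ 2}

variable {c : ℝ}

lemma exp_neg_mul_exp (t : ℝ) : exp (-t) * exp t = 1 := by
  rw [← exp_add, neg_add_cancel, exp_zero]

lemma lcFlow_fst_mul_snd (t : ℝ) (p : ℝ × ℝ) : (lcFlow t p).1 * (lcFlow t p).2 = p.1 * p.2 := by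
  simp only [lcFlow]
  linear_combination p.1 * p.2 * exp_neg_mul_exp t

lemma continuous_lcFlow (t : ℝ) : Continuous (lcFlow t) := by
  unfold lcFlow; fun_prop

lemma measurableSet_fRegion (a b : ℝ) : MeasurableSet (fRegion c a b) := by
  unfold fRegion; measurability

lemma measurableSet_eRegion (T : ℝ) : MeasurableSet (eRegion c T) := by
  unfold eRegion; measurability

lemma measurableSet_lcBox : MeasurableSet (lcBox c) :=
  measurableSet_Icc.prod measurableSet_Icc

lemma measurableSet_shell (δ : ℝ) : MeasurableSet (shell c δ) :=
  (measurableSet_fRegion _ _).inter (by measurability)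

lemma lcFlow_preimage_fRegion (t a b : ℝ) :
    lcFlow t ⁻¹' fRegion c a b = fRegion c (exp t * a) (exp t * b) := by
  ext p
  simp only [fRegion, mem_preimage, mem_ofPred_eq, lcFlow_fst_mul_snd]
  simp only [lcFlow, exp_neg, inv_mul_eq_div, le_div_iff₀ (exp_pos t), div_lt_iff₀ (exp_pos t),
    mul_comm a, mul_comm b]

lemma lcFlow_preimage_shell (t : ℝ) :
    lcFlow t ⁻¹' shell c (exp (-2 * t)) =
      fRegion c (exp t) (exp (t + 1)) ∩ {p | c ^ 2 ≤ (p.1 + p.2) * p.2} := by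
  rw [shell, preimage_inter, lcFlow_preimage_fRegion, mul_one, ← exp_add]
  congr 1
  ext p
  have h : exp (-2 * t) * exp t ^ 2 = 1 := by
    rw [sq, ← exp_add, ← exp_add, show -2 * t + (t + t) = 0 by ring, exp_zero]
  simp only [mem_preimage, mem_ofPred_eq, lcFlow_fst_mul_snd]
  rw [show exp (-2 * t) * (lcFlow t p).2 ^ 2 = p.2 ^ 2 by
    simp only [lcFlow]; linear_combination p.2 ^ 2 * h]
  ring_nf

lemma fRegion_eq_union {a b b' : ℝ} (hab : a ≤ b) (hbb' : b ≤ b') :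
    fRegion c a b' = fRegion c a b ∪ fRegion c b b' := by
  ext p
  simp only [fRegion, mem_union, mem_ofPred_eq]
  constructor
  · rintro ⟨h, ha, hb'⟩
    rcases lt_or_ge p.1 b with hb | hb
    exacts [Or.inl ⟨h, ha, hb⟩, Or.inr ⟨h, hb, hb'⟩]
  · rintro (⟨h, ha, hb⟩ | ⟨h, hb, hb'⟩)
    exacts [⟨h, ha, hb.trans_le hbb'⟩, ⟨h, hab.trans hb, hb'⟩]

lemma disjoint_fRegion (a b b' : ℝ) : Disjoint (fRegion c a b) (fRegion c b b') :=
  disjoint_left.2 fun _ h h' => (h.2.2.trans_le h'.2.1).false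

lemma fRegion_self (a : ℝ) : fRegion c a a = ∅ :=
  eq_empty_of_forall_notMem fun _ h => (h.2.1.trans_lt h.2.2).false

lemma fRegion_subset_fRegion {a a' b b' : ℝ} (ha : a' ≤ a) (hb : b ≤ b') :
    fRegion c a b ⊆ fRegion c a' b' :=
  fun _ ⟨h, h1, h2⟩ => ⟨h, ha.trans h1, h2.trans_le hb⟩

lemma fRegion_subset_iUnion (T : ℝ) :
    fRegion c 1 (exp T) ⊆ ⋃ k ∈ Finset.range (⌊T⌋₊ + 1), fRegion c (exp k) (exp (k + 1)) := by
  rintro p ⟨h, h1, hT⟩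
  have hp : 0 < p.1 := one_pos.trans_le h1
  have hlog : 0 ≤ log p.1 := log_nonneg h1
  refine mem_biUnion (x := ⌊log p.1⌋₊) ?_ ⟨h, ?_, ?_⟩
  · rw [Finset.mem_coe, Finset.mem_range_succ_iff]
    exact Nat.floor_le_floor ((log_lt_iff_lt_exp hp).2 hT).le
  · calc exp ⌊log p.1⌋₊ ≤ exp (log p.1) := exp_le_exp.2 (Nat.floor_le hlog)
      _ = p.1 := exp_log hp
  · calc p.1 = exp (log p.1) := (exp_log hp).symm
      _ < exp (⌊log p.1⌋₊ + 1) := exp_lt_exp.2 (Nat.lt_floor_add_one _)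

lemma shell_mono {δ δ' : ℝ} (h : δ ≤ δ') : shell c δ ⊆ shell c δ' := by
  rintro p ⟨hF, hδ : c ^ 2 ≤ _⟩
  refine ⟨hF, hδ.trans ?_⟩
  gcongr

lemma iInter_shell_eq_empty : ⋂ k : ℕ, shell c (exp (-2 * k)) = ∅ := by
  refine eq_empty_of_forall_notMem fun p hp => ?_
  rw [mem_iInter] at hp
  have hlim : Tendsto (fun k : ℕ => p.1 * p.2 + exp (-2 * k) * p.2 ^ 2) atTop
      (𝓝 (p.1 * p.2 + 0 * p.2 ^ 2)) :=
    tendsto_const_nhds.add ((tendsto_exp_atBot.comp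
      (tendsto_natCast_atTop_atTop.const_mul_atTop_of_neg (by norm_num))).mul_const _)
  rw [zero_mul, add_zero] at hlim
  exact (lt_irrefl _ ((ge_of_tendsto' hlim fun k => (hp k).2).trans_lt (hp 0).1.1))

lemma mem_of_mem_eRegion {T : ℝ} (hT : 0 ≤ T) {p : ℝ × ℝ} (hp₁ : 0 ≤ p.1) (hp₂ : 0 ≤ p.2)
    (hp : p ∈ eRegion c T) : p ∈ fRegion c 1 (exp T) ∪ lcBox c ∪ lcFlow T ⁻¹' lcBox c := by
  obtain ⟨u, v⟩ := p
  obtain ⟨hc, h2, hcosh⟩ := hp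
  simp only at hp₁ hp₂ hc h2 hcosh
  have hexp := exp_neg_mul_exp T
  rcases lt_or_ge u 1 with hu | hu
  · -- here `1 < v`, so `v < (u + v) v < c²`
    exact Or.inl <| Or.inr ⟨⟨hp₁, by linarith⟩, hp₂, by nlinarith⟩
  rcases lt_or_ge u (exp T) with huT | huT
  · exact Or.inl <| Or.inl ⟨by nlinarith, hu, huT⟩
  have hneg : exp (-T) ≤ 1 := exp_le_one_iff.2 (by linarith)
  rw [cosh_eq] at hcosh
  refine Or.inr ⟨⟨by simp only [lcFlow]; positivity, ?_⟩, by simp only [lcFlow]; positivity, ?_⟩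
  · show exp (-T) * u ≤ 2
    nlinarith [exp_pos (-T)]
  · -- `e^T v ≤ u v < c²`
    show exp T * v ≤ c ^ 2 + 2
    nlinarith

lemma mem_of_mem_fRegion {T : ℝ} {p : ℝ × ℝ} (hp₂ : 0 ≤ p.2) (hp : p ∈ fRegion c 1 (exp T)) :
    p ∈ eRegion c T ∪ lcBox c ∪ lcFlow T ⁻¹' lcBox c ∪
      ⋃ k ∈ Finset.range (⌊T⌋₊ + 1), lcFlow k ⁻¹' shell c (exp (-2 * k)) := by
  rcases le_or_gt (c ^ 2) ((p.1 + p.2) * p.2) with hs | hs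
  · refine Or.inr ?_
    obtain ⟨k, hk, hpk⟩ := mem_iUnion₂.1 (fRegion_subset_iUnion T hp)
    exact mem_biUnion hk (by rw [lcFlow_preimage_shell]; exact ⟨hpk, hs⟩)
  refine Or.inl ?_
  obtain ⟨u, v⟩ := p
  obtain ⟨-, hu, huT⟩ := hp
  simp only at hp₂ hs hu huT
  rcases lt_or_ge (u + v) 2 with h2 | h2
  · exact Or.inl <| Or.inr ⟨⟨by linarith, by linarith⟩, hp₂, by nlinarith⟩
  rcases lt_or_ge (u + v) (2 * cosh T) with hcosh | hcosh
  · exact Or.inl <| Or.inl ⟨hs, h2, hcosh⟩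
  have hexp := exp_neg_mul_exp T
  rw [cosh_eq] at hcosh
  refine Or.inr ⟨⟨by simp only [lcFlow]; positivity, ?_⟩, by simp only [lcFlow]; positivity, ?_⟩
  · show exp (-T) * u ≤ 2
    nlinarith [exp_pos (-T)]
  · -- `e^T v ≤ (u + v) v < c²`, as `u + v ≥ 2 cosh T ≥ e^T`
    show exp T * v ≤ c ^ 2 + 2
    nlinarith [exp_pos (-T)]

variable {ν : Measure (ℝ × ℝ)}

lemma measure_lcFlow_preimage (hinv : ∀ t, ν.map (lcFlow t) = ν) (t : ℝ) {s : Set (ℝ × ℝ)}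
    (hs : MeasurableSet s) : ν (lcFlow t ⁻¹' s) = ν s := by
  rw [← Measure.map_apply (continuous_lcFlow t).measurable hs, hinv]

lemma measure_fRegion_exp_nat (hinv : ∀ t, ν.map (lcFlow t) = ν) (m : ℕ) :
    ν (fRegion c 1 (exp m)) = m * ν (fRegion c 1 (exp 1)) := by
  induction m with
  | zero => rw [Nat.cast_zero, exp_zero, fRegion_self, measure_empty, Nat.cast_zero, zero_mul]
  | succ m ih =>
    have hstep : fRegion c (exp m) (exp (m + 1)) = lcFlow m ⁻¹' fRegion c 1 (exp 1) := by
      rw [lcFlow_preimage_fRegion, mul_one, ← exp_add]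
    push_cast
    rw [fRegion_eq_union (one_le_exp m.cast_nonneg) (exp_le_exp.2 (by linarith)),
      measure_union (disjoint_fRegion _ _ _) (measurableSet_fRegion _ _), ih, hstep,
      measure_lcFlow_preimage hinv _ (measurableSet_fRegion _ _), add_one_mul]

lemma measure_fRegion_ne_top [IsFiniteMeasureOnCompacts ν] (hQ : ∀ᵐ p ∂ν, 0 ≤ p.1 ∧ 0 ≤ p.2) :
    ν (fRegion c 1 (exp 1)) ≠ ∞ := by
  have hK : IsCompact (Icc 0 (exp 1) ×ˢ Icc 0 (c ^ 2)) := isCompact_Icc.prod isCompact_Icc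
  refine ne_top_of_le_ne_top hK.measure_lt_top.ne (measure_mono_ae (hQ.mono ?_))
  rintro ⟨u, v⟩ ⟨hu, hv⟩ ⟨hc, h1, hlt⟩
  exact ⟨⟨hu, hlt.le⟩, hv, by simp only at *; nlinarith⟩

lemma measure_lcBox_ne_top [IsFiniteMeasureOnCompacts ν] : ν (lcBox c) ≠ ∞ :=
  (isCompact_Icc.prod isCompact_Icc).measure_lt_top.ne

lemma tendsto_measure_shell [IsFiniteMeasureOnCompacts ν] (hQ : ∀ᵐ p ∂ν, 0 ≤ p.1 ∧ 0 ≤ p.2) :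
    Tendsto (fun k : ℕ => ν (shell c (exp (-2 * k)))) atTop (𝓝 0) := by
  have hanti : Antitone fun k : ℕ => shell c (exp (-2 * k)) :=
    fun k k' h => shell_mono (exp_le_exp.2 (by linarith [(Nat.cast_le (α := ℝ)).2 h]))
  have h := tendsto_measure_iInter_atTop (μ := ν)
    (fun k => (measurableSet_shell _).nullMeasurableSet) hanti
    ⟨0, ne_top_of_le_ne_top (measure_fRegion_ne_top hQ) (measure_mono inter_subset_left)⟩
  rwa [iInter_shell_eq_empty, measure_empty] at h

lemma measure_eRegion_le (hinv : ∀ t, ν.map (lcFlow t) = ν)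
    (hQ : ∀ᵐ p ∂ν, 0 ≤ p.1 ∧ 0 ≤ p.2) {T : ℝ} (hT : 0 ≤ T) :
    ν (eRegion c T) ≤ (⌊T⌋₊ + 1) * ν (fRegion c 1 (exp 1)) + 2 * ν (lcBox c) := by
  have hF : ν (fRegion c 1 (exp T)) ≤ (⌊T⌋₊ + 1) * ν (fRegion c 1 (exp 1)) := by
    rw [← Nat.cast_succ, ← measure_fRegion_exp_nat hinv]
    exact measure_mono (fRegion_subset_fRegion le_rfl
      (exp_le_exp.2 (by push_cast; exact (Nat.lt_floor_add_one T).le)))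
  calc ν (eRegion c T)
      ≤ ν (fRegion c 1 (exp T) ∪ lcBox c ∪ lcFlow T ⁻¹' lcBox c) :=
        measure_mono_ae (hQ.mono fun p hp => mem_of_mem_eRegion hT hp.1 hp.2)
    _ ≤ ν (fRegion c 1 (exp T)) + ν (lcBox c) + ν (lcFlow T ⁻¹' lcBox c) :=
        (measure_union_le _ _).trans (by gcongr; exact measure_union_le _ _)
    _ ≤ _ := by
        rw [measure_lcFlow_preimage hinv T measurableSet_lcBox, two_mul, ← add_assoc]
        gcongr

lemma le_measure_eRegion (hinv : ∀ t, ν.map (lcFlow t) = ν)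
    (hQ : ∀ᵐ p ∂ν, 0 ≤ p.1 ∧ 0 ≤ p.2) {T : ℝ} (hT : 0 ≤ T) :
    ⌊T⌋₊ * ν (fRegion c 1 (exp 1)) ≤ ν (eRegion c T) + 2 * ν (lcBox c) +
      ∑ k ∈ Finset.range (⌊T⌋₊ + 1), ν (shell c (exp (-2 * k))) := by
  have hshells : ν (⋃ k ∈ Finset.range (⌊T⌋₊ + 1), lcFlow k ⁻¹' shell c (exp (-2 * k))) ≤
      ∑ k ∈ Finset.range (⌊T⌋₊ + 1), ν (shell c (exp (-2 * k))) := by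
    refine (measure_biUnion_finset_le _ _).trans_eq (Finset.sum_congr rfl fun k _ => ?_)
    exact measure_lcFlow_preimage hinv _ (measurableSet_shell _)
  calc ⌊T⌋₊ * ν (fRegion c 1 (exp 1))
      = ν (fRegion c 1 (exp ⌊T⌋₊)) := (measure_fRegion_exp_nat hinv _).symm
    _ ≤ ν (fRegion c 1 (exp T)) :=
        measure_mono (fRegion_subset_fRegion le_rfl (exp_le_exp.2 (Nat.floor_le hT)))
    _ ≤ ν (eRegion c T ∪ lcBox c ∪ lcFlow T ⁻¹' lcBox c ∪
          ⋃ k ∈ Finset.range (⌊T⌋₊ + 1), lcFlow k ⁻¹' shell c (exp (-2 * k))) :=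
        measure_mono_ae (hQ.mono fun p hp => mem_of_mem_fRegion hp.2)
    _ ≤ ν (eRegion c T) + ν (lcBox c) + ν (lcFlow T ⁻¹' lcBox c) +
          ν (⋃ k ∈ Finset.range (⌊T⌋₊ + 1), lcFlow k ⁻¹' shell c (exp (-2 * k))) :=
        (measure_union_le _ _).trans (by
          gcongr
          exact (measure_union_le _ _).trans (by gcongr; exact measure_union_le _ _))
    _ ≤ _ := by
        rw [measure_lcFlow_preimage hinv T measurableSet_lcBox, two_mul, ← add_assoc (ν _)]
        gcongr

theorem tendsto_measure_eRegion_div [IsFiniteMeasureOnCompacts ν]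
    (hinv : ∀ t, ν.map (lcFlow t) = ν) (hQ : ∀ᵐ p ∂ν, 0 ≤ p.1 ∧ 0 ≤ p.2) (c : ℝ) :
    Tendsto (fun T => ν (eRegion c T) / ENNReal.ofReal T) atTop
      (𝓝 (ν (fRegion c 1 (exp 1)))) :=
  ENNReal.tendsto_div_ofReal_of_floor_bounds (measure_fRegion_ne_top hQ)
    (by finiteness [measure_lcBox_ne_top (ν := ν) (c := c)])
    (fun k => ne_top_of_le_ne_top (measure_fRegion_ne_top hQ) (measure_mono inter_subset_left))
    (tendsto_measure_shell hQ)
    ((eventually_ge_atTop 0).mono fun _ hT => measure_eRegion_le hinv hQ hT)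
    ((eventually_ge_atTop 0).mono fun _ hT => le_measure_eRegion hinv hQ hT)

section Coordinates

variable {n : ℕ}

lemma sndC_ne_lastC : sndC n ≠ lastC n :=
  (show sndC n < lastC n from n.lt_succ_self).ne

lemma castLE_ne_sndC (i : Fin n) : (Fin.castLE (by omega) i : Fin (n + 2)) ≠ sndC n :=
  (show (Fin.castLE _ i : Fin (n + 2)) < sndC n from i.isLt).ne

lemma castLE_ne_lastC (i : Fin n) : (Fin.castLE (by omega) i : Fin (n + 2)) ≠ lastC n :=
  (show (Fin.castLE _ i : Fin (n + 2)) < lastC n from i.isLt.trans n.lt_succ_self).ne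

lemma gmap_sndC (t : ℝ) (x : EuclideanSpace ℝ (Fin (n + 2))) :
    gmap n t x (sndC n) = cosh t * x (sndC n) - sinh t * x (lastC n) := by
  simp [gmap]

lemma gmap_lastC (t : ℝ) (x : EuclideanSpace ℝ (Fin (n + 2))) :
    gmap n t x (lastC n) = -sinh t * x (sndC n) + cosh t * x (lastC n) := by
  simp [gmap, sndC_ne_lastC.symm]

lemma gmap_of_ne {i : Fin (n + 2)} (h₁ : i ≠ sndC n) (h₂ : i ≠ lastC n) (t : ℝ)
    (x : EuclideanSpace ℝ (Fin (n + 2))) : gmap n t x i = x i := by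
  simp [gmap, h₁, h₂]

lemma headN_gmap (t : ℝ) (x : EuclideanSpace ℝ (Fin (n + 2))) :
    headN n (gmap n t x) = headN n x := by
  ext i
  exact gmap_of_ne (castLE_ne_sndC i) (castLE_ne_lastC i) t x

lemma gmap_neg_gmap (t : ℝ) (x : EuclideanSpace ℝ (Fin (n + 2))) :
    gmap n (-t) (gmap n t x) = x := by
  have h := cosh_sq_sub_sinh_sq t
  ext i
  by_cases h₁ : i = sndC n
  · subst h₁
    simp only [gmap_sndC, gmap_lastC, cosh_neg, sinh_neg]
    linear_combination x (sndC n) * h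
  by_cases h₂ : i = lastC n
  · subst h₂
    simp only [gmap_sndC, gmap_lastC, cosh_neg, sinh_neg]
    linear_combination x (lastC n) * h
  rw [gmap_of_ne h₁ h₂, gmap_of_ne h₁ h₂]

lemma continuous_gmap (t : ℝ) : Continuous (gmap n t) := by
  refine (PiLp.continuous_toLp 2 _).comp (continuous_pi fun i => ?_)
  split_ifs <;> fun_prop

lemma measurableEmbedding_gmap (t : ℝ) : MeasurableEmbedding (gmap n t) :=
  (Homeomorph.mk ⟨gmap n t, gmap n (-t), gmap_neg_gmap t,
    fun x => by simpa using gmap_neg_gmap (-t) x⟩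
    (continuous_gmap t) (continuous_gmap (-t))).measurableEmbedding

end Coordinates

def lcCoord (n : ℕ) (x : EuclideanSpace ℝ (Fin (n + 2))) : ℝ × ℝ :=
  (x (sndC n) + x (lastC n), x (lastC n) - x (sndC n))

section LightConeCoordinates

variable {n : ℕ}

lemma continuous_lcCoord : Continuous (lcCoord n) := by
  unfold lcCoord; fun_prop

lemma lcCoord_gmap (t : ℝ) (x : EuclideanSpace ℝ (Fin (n + 2))) :
    lcCoord n (gmap n t x) = lcFlow t (lcCoord n x) := by
  simp only [lcCoord, lcFlow, gmap_sndC, gmap_lastC]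
  rw [← cosh_sub_sinh, ← cosh_add_sinh]
  ext <;> ring

lemma sum_sq_castSucc (x : EuclideanSpace ℝ (Fin (n + 2))) :
    ∑ i : Fin (n + 1), x (Fin.castSucc i) ^ 2 = ‖headN n x‖ ^ 2 + x (sndC n) ^ 2 := by
  rw [EuclideanSpace.real_norm_sq_eq, Fin.sum_univ_castSucc]
  rfl

lemma mem_lightCone_iff {x : EuclideanSpace ℝ (Fin (n + 2))} :
    x ∈ lightCone n ↔ ‖headN n x‖ ^ 2 = (lcCoord n x).1 * (lcCoord n x).2 ∧
      0 ≤ (lcCoord n x).1 ∧ 0 ≤ (lcCoord n x).2 := by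
  simp only [lightCone, Qf, lcCoord, sum_sq_castSucc, mem_ofPred_eq]
  constructor
  · rintro ⟨hQ, hl⟩
    have hsq : x (sndC n) ^ 2 ≤ x (lastC n) ^ 2 := by nlinarith [sq_nonneg ‖headN n x‖]
    obtain ⟨h₁, h₂⟩ := abs_le_of_sq_le_sq' hsq hl
    exact ⟨by linear_combination hQ, by linarith, by linarith⟩
  · rintro ⟨h, hu, hv⟩
    exact ⟨by linear_combination h, by linarith⟩

lemma gmap_mem_lightCone_iff {t : ℝ} {x : EuclideanSpace ℝ (Fin (n + 2))} :
    gmap n t x ∈ lightCone n ↔ x ∈ lightCone n := by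
  simp only [mem_lightCone_iff, headN_gmap, lcCoord_gmap, lcFlow_fst_mul_snd]
  simp only [lcFlow, mul_nonneg_iff_of_pos_left (exp_pos _)]

lemma norm_le_of_mem_lightCone {x : EuclideanSpace ℝ (Fin (n + 2))} (hx : x ∈ lightCone n) :
    ‖x‖ ≤ (lcCoord n x).1 + (lcCoord n x).2 := by
  obtain ⟨hQ, hl⟩ := hx
  have hnorm : ‖x‖ ^ 2 = 2 * x (lastC n) ^ 2 := by
    rw [EuclideanSpace.real_norm_sq_eq, Fin.sum_univ_castSucc]
    simp only [Qf] at hQ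
    change ∑ i : Fin (n + 1), x (Fin.castSucc i) ^ 2 + x (lastC n) ^ 2 = _
    linarith
  rw [← sq_le_sq₀ (norm_nonneg x) (by simp only [lcCoord]; linarith), hnorm]
  simp only [lcCoord]
  nlinarith

end LightConeCoordinates

def coneSector (n : ℕ) (A : Set (sphere (0 : EuclideanSpace ℝ (Fin n)) 1)) :
    Set (EuclideanSpace ℝ (Fin (n + 2))) :=
  {x | x ∈ lightCone n ∧ headN n x ≠ 0 ∧ dir n x ∈ Subtype.val '' A}

def coneMeasure {n : ℕ} (lam : Measure (EuclideanSpace ℝ (Fin (n + 2))))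
    (A : Set (sphere (0 : EuclideanSpace ℝ (Fin n)) 1)) : Measure (ℝ × ℝ) :=
  (lam.restrict (coneSector n A)).map (lcCoord n)

section ConeMeasure

variable {n : ℕ} {lam : Measure (EuclideanSpace ℝ (Fin (n + 2)))}
  {A : Set (sphere (0 : EuclideanSpace ℝ (Fin n)) 1)}

lemma gmap_preimage_coneSector (t : ℝ) : gmap n t ⁻¹' coneSector n A = coneSector n A := by
  ext x
  simp only [coneSector, mem_preimage, mem_ofPred_eq, gmap_mem_lightCone_iff, dir, headN_gmap]

lemma coneMeasure_apply {s : Set (ℝ × ℝ)} (hs : MeasurableSet s) :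
    coneMeasure lam A s = lam (lcCoord n ⁻¹' s ∩ coneSector n A) := by
  rw [coneMeasure, Measure.map_apply continuous_lcCoord.measurable hs,
    Measure.restrict_apply (continuous_lcCoord.measurable hs)]

lemma map_lcFlow_coneMeasure (hinv : ∀ t, lam.map (gmap n t) = lam) (t : ℝ) :
    (coneMeasure lam A).map (lcFlow t) = coneMeasure lam A := by
  have hsector :
      (lam.restrict (coneSector n A)).map (gmap n t) = lam.restrict (coneSector n A) := by
    conv_lhs => rw [← gmap_preimage_coneSector t]
    rw [← (measurableEmbedding_gmap t).restrict_map, hinv]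
  have hcomm : lcFlow t ∘ lcCoord n = lcCoord n ∘ gmap n t :=
    funext fun x => (lcCoord_gmap t x).symm
  rw [coneMeasure, Measure.map_map (continuous_lcFlow t).measurable continuous_lcCoord.measurable,
    hcomm, ← Measure.map_map continuous_lcCoord.measurable (continuous_gmap t).measurable, hsector]

lemma ae_nonneg_coneMeasure : ∀ᵐ p ∂coneMeasure lam A, 0 ≤ p.1 ∧ 0 ≤ p.2 := by
  rw [ae_iff, coneMeasure_apply (by measurability)]
  refine measure_mono_null (fun x ⟨hx, hS⟩ => ?_) measure_empty
  exact hx (mem_lightCone_iff.1 hS.1).2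

instance [IsFiniteMeasureOnCompacts lam] : IsFiniteMeasureOnCompacts (coneMeasure lam A) := by
  refine ⟨fun K hK => ?_⟩
  obtain ⟨r, hr⟩ := hK.isBounded.subset_closedBall 0
  have hsub : lcCoord n ⁻¹' K ∩ coneSector n A ⊆ closedBall 0 (2 * r) := by
    rintro x ⟨hxK, hS⟩
    have hp := mem_closedBall_zero_iff.1 (hr hxK)
    rw [mem_closedBall_zero_iff]
    refine (norm_le_of_mem_lightCone hS.1).trans ?_
    linarith [(le_abs_self _).trans ((norm_fst_le (lcCoord n x)).trans hp),
      (le_abs_self _).trans ((norm_snd_le (lcCoord n x)).trans hp)]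
  rw [coneMeasure_apply hK.isClosed.measurableSet]
  exact (measure_mono hsub).trans_lt (isCompact_closedBall _ _).measure_lt_top

lemma EsetA_eq (T c : ℝ) : EsetA n T c A = lcCoord n ⁻¹' eRegion c T ∩ coneSector n A := by
  ext x
  have h2 : x (sndC n) + x (lastC n) + (x (lastC n) - x (sndC n)) = 2 * x (lastC n) := by ring
  simp only [EsetA, Eset, coneSector, eRegion, lcCoord, mem_inter_iff, mem_preimage,
    mem_ofPred_eq, h2]
  constructor
  · rintro ⟨⟨hx, hc, h1, hT⟩, hS⟩
    exact ⟨⟨hc, by linarith, by linarith⟩, hx, hS⟩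
  · rintro ⟨⟨hc, h1, hT⟩, hx, hS⟩
    exact ⟨⟨hx, hc, by linarith, by linarith⟩, hS⟩

lemma FsetA_eq (T c : ℝ) :
    FsetA n T c A = lcCoord n ⁻¹' fRegion c 1 (exp T) ∩ coneSector n A := by
  ext x
  have h2 : (x (sndC n) + x (lastC n)) * (x (lastC n) - x (sndC n)) =
    x (lastC n) ^ 2 - x (sndC n) ^ 2 := by ring
  simp only [FsetA, Fset, coneSector, fRegion, lcCoord, mem_inter_iff, mem_preimage,
    mem_ofPred_eq, h2]
  tauto

end ConeMeasure

end LightCone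

theorem EsetA_volume_asymptotics_general (n : ℕ)
    (lam : Measure (EuclideanSpace ℝ (Fin (n + 2))))
    (hinv : ∀ t : ℝ, Measure.map (gmap n t) lam = lam)
    (hfc : IsFiniteMeasureOnCompacts lam)
    (c : ℝ)
    (A : Set ↑(sphere (0 : EuclideanSpace ℝ (Fin n)) 1)) :
    Tendsto (fun T : ℝ => lam (EsetA n T c A) / ENNReal.ofReal T) atTop
      (𝓝 (lam (FsetA n 1 c A))) := by
  have h := LightCone.tendsto_measure_eRegion_div (ν := LightCone.coneMeasure lam A)
    (LightCone.map_lcFlow_coneMeasure hinv) LightCone.ae_nonneg_coneMeasure c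
  simp only [LightCone.coneMeasure_apply (LightCone.measurableSet_eRegion _),
    LightCone.coneMeasure_apply (LightCone.measurableSet_fRegion _ _)] at h
  simpa only [LightCone.EsetA_eq, LightCone.FsetA_eq] using h

/-- **Section 3.3**: `λ(E_{T,c,A})/T → λ(F_{1,c,A})` as `T → ∞`. -/
theorem EsetA_volume_asymptotics (n : ℕ) (hn : 1 ≤ n)
    (lam : Measure (EuclideanSpace ℝ (Fin (n + 2))))
    (hinv : ∀ t : ℝ, Measure.map (gmap n t) lam = lam)
    (hfc : IsFiniteMeasureOnCompacts lam)
    (c : ℝ) (hc : 0 < c)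
    (A : Set ↑(sphere (0 : EuclideanSpace ℝ (Fin n)) 1)) (hA : MeasurableSet A) :
    Tendsto (fun T : ℝ => lam (EsetA n T c A) / ENNReal.ofReal T) atTop
      (𝓝 (lam (FsetA n 1 c A))) :=
  EsetA_volume_asymptotics_general n lam hinv hfc c A
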